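/- Consider a finite MDP with nonempty finite state set S, nonempty finite action set A, discount γ ∈ [0,1), true transition probabilities p and true reward r with 0 ≤ r(s,a) ≤ r_max for all (s,a), and an approximate (MLE) model with transition probabilities p̂ and reward r̂ (both p(·|s,a) and p̂(·|s,a) are probability distributions on S for every (s,a)). Let B and B̂ be the hard Bellman optimality operators induced by (p, r) and (p̂, r̂) respectively. Let Q* satisfy Q* = BQ* and let Q̂ satisfy Q̂ = B̂Q̂, and assume 0 ≤ Q̂(s,a) ≤ r_max/(1−γ) for all (s,a). If max_{s,a} Σ_{s'} |p(s'|s,a) − p̂(s'|s,a)| ≤ ε_p and max_{s,a} |r(s,a) − r̂(s,a)| ≤ ε_r, then max_{s,a} |Q*(s,a) − Q̂(s,a)| ≤ ε_r/(1−γ) + γ · ε_p · r_max / (2(1−γ)²). -/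

import Mathlib

/-- The hard Bellman optimality operator induced by a finite MDP model `(p, r, γ)`. -/
noncomputable def hardBellman {S A : Type*} [Fintype S] [Fintype A] [Nonempty A]
    (p : S → A → S → ℝ) (r : S → A → ℝ) (γ : ℝ) (Q : S × A → ℝ) : S × A → ℝ :=
  fun sa =>
    r sa.1 sa.2 +
      γ * ∑ s' : S, p sa.1 sa.2 s' *
        Finset.univ.sup' Finset.univ_nonempty (fun a' : A => Q (s', a'))

/-!
The true and the approximate Bellman operators differ, at a fixed `Q`, by the reward error plus
`γ` times the difference of the expectations of the greedy value `max_a' Q(·, a')` under `p` and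
`p̂`. Since `p` and `p̂` have the same total mass, that difference is unchanged when the greedy
value of `Q̂`, which lies in `[0, r_max/(1-γ)]`, is centred at the midpoint of that interval; this
bounds it by `ε_p r_max / (2(1-γ))`. Together with the `γ`-contraction of `B` in sup norm this gives
`‖Q* - Q̂‖ ≤ ε_r + γ ε_p r_max / (2(1-γ)) + γ ‖Q* - Q̂‖`, which is the claim after rearranging.
-/

namespace Finset

variable {ι : Type*}

theorem sup'_le_sup'_add_of_le_add (s : Finset ι) (hs : s.Nonempty) {f g : ι → ℝ} {D : ℝ}
    (h : ∀ i ∈ s, f i ≤ g i + D) : s.sup' hs f ≤ s.sup' hs g + D :=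
  sup'_le _ _ fun i hi => (h i hi).trans (add_le_add_left (le_sup' g hi) D)

theorem abs_sup'_sub_sup'_le (s : Finset ι) (hs : s.Nonempty) {f g : ι → ℝ} {D : ℝ}
    (h : ∀ i ∈ s, |f i - g i| ≤ D) : |s.sup' hs f - s.sup' hs g| ≤ D := by
  rw [abs_sub_le_iff, sub_le_iff_le_add, sub_le_iff_le_add, add_comm D, add_comm D]
  constructor
  · refine sup'_le_sup'_add_of_le_add s hs fun i hi => ?_
    linarith [(abs_sub_le_iff.mp (h i hi)).1]
  · refine sup'_le_sup'_add_of_le_add s hs fun i hi => ?_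
    linarith [(abs_sub_le_iff.mp (h i hi)).2]

theorem abs_sum_mul_le_of_sum_eq_one (s : Finset ι) {w x : ι → ℝ} {D : ℝ}
    (hw : ∀ i ∈ s, 0 ≤ w i) (hw1 : ∑ i ∈ s, w i = 1) (hx : ∀ i ∈ s, |x i| ≤ D) :
    |∑ i ∈ s, w i * x i| ≤ D :=
  calc |∑ i ∈ s, w i * x i| ≤ ∑ i ∈ s, |w i * x i| := abs_sum_le_sum_abs _ _
    _ ≤ ∑ i ∈ s, w i * D := sum_le_sum fun i hi => by
        rw [abs_mul, abs_of_nonneg (hw i hi)]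
        exact mul_le_mul_of_nonneg_left (hx i hi) (hw i hi)
    _ = D := by rw [← sum_mul, hw1, one_mul]

theorem abs_sum_mul_sub_sum_mul_le_of_sum_eq (s : Finset ι) {μ ν v : ι → ℝ} {a b : ℝ}
    (hμν : ∑ i ∈ s, μ i = ∑ i ∈ s, ν i) (hv : ∀ i ∈ s, v i ∈ Set.Icc a b) :
    |∑ i ∈ s, μ i * v i - ∑ i ∈ s, ν i * v i| ≤ (∑ i ∈ s, |μ i - ν i|) * ((b - a) / 2) := by
  have hcentre : ∑ i ∈ s, μ i * v i - ∑ i ∈ s, ν i * v i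
      = ∑ i ∈ s, (μ i - ν i) * (v i - (a + b) / 2) := by
    simp only [mul_sub, sub_mul, sum_sub_distrib, ← sum_mul, hμν]
    ring
  rw [hcentre, sum_mul]
  refine (abs_sum_le_sum_abs _ _).trans (sum_le_sum fun i hi => ?_)
  rw [abs_mul]
  refine mul_le_mul_of_nonneg_left (abs_le.mpr ⟨?_, ?_⟩) (abs_nonneg _) <;>
    linarith [(hv i hi).1, (hv i hi).2]

end Finset

section Bellman

variable {S A : Type*} [Fintype A] [Nonempty A]

noncomputable def greedyValue (Q : S × A → ℝ) (s : S) : ℝ :=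
  Finset.univ.sup' Finset.univ_nonempty fun a => Q (s, a)

theorem hardBellman_apply [Fintype S] (p : S → A → S → ℝ) (r : S → A → ℝ) (γ : ℝ)
    (Q : S × A → ℝ) (s : S) (a : A) :
    hardBellman p r γ Q (s, a) = r s a + γ * ∑ s', p s a s' * greedyValue Q s' :=
  rfl

theorem abs_greedyValue_sub_le {Q Q' : S × A → ℝ} {D : ℝ} (h : ∀ sa, |Q sa - Q' sa| ≤ D)
    (s : S) : |greedyValue Q s - greedyValue Q' s| ≤ D :=
  Finset.abs_sup'_sub_sup'_le _ _ fun a _ => h (s, a)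

theorem greedyValue_mem_Icc {Q : S × A → ℝ} {m M : ℝ} (h : ∀ sa, Q sa ∈ Set.Icc m M) (s : S) :
    greedyValue Q s ∈ Set.Icc m M :=
  ⟨(h (s, Classical.arbitrary A)).1.trans (Finset.le_sup' (fun a => Q (s, a)) (Finset.mem_univ _)),
    Finset.sup'_le _ _ fun a _ => (h (s, a)).2⟩

theorem hardBellman_sub_hardBellman [Fintype S] (p p' : S → A → S → ℝ) (r r' : S → A → ℝ)
    (γ : ℝ) (Q Q' : S × A → ℝ) (s : S) (a : A) :
    hardBellman p r γ Q (s, a) - hardBellman p' r' γ Q' (s, a)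
      = (r s a - r' s a) + γ * (∑ s', p s a s' * (greedyValue Q s' - greedyValue Q' s')
          + (∑ s', p s a s' * greedyValue Q' s' - ∑ s', p' s a s' * greedyValue Q' s')) := by
  simp only [hardBellman_apply, mul_sub, Finset.sum_sub_distrib]
  ring

theorem abs_hardBellman_sub_hardBellman_le [Fintype S] (p p' : S → A → S → ℝ) (r r' : S → A → ℝ)
    {γ D M : ℝ} {Q Q' : S × A → ℝ} {s : S} {a : A}
    (hp : ∀ s', 0 ≤ p s a s') (hpsum : ∑ s', p s a s' = 1) (hp'sum : ∑ s', p' s a s' = 1)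
    (hγ : 0 ≤ γ) (hQQ' : ∀ sa, |Q sa - Q' sa| ≤ D) (hQ' : ∀ sa, Q' sa ∈ Set.Icc 0 M) :
    |hardBellman p r γ Q (s, a) - hardBellman p' r' γ Q' (s, a)|
      ≤ |r s a - r' s a| + γ * (D + (∑ s', |p s a s' - p' s a s'|) * (M / 2)) := by
  have hexpect := Finset.abs_sum_mul_le_of_sum_eq_one Finset.univ (fun s' _ => hp s') hpsum
    fun s' _ => abs_greedyValue_sub_le hQQ' s'
  have hmodel := Finset.abs_sum_mul_sub_sum_mul_le_of_sum_eq Finset.univ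
    (hpsum.trans hp'sum.symm) fun s' _ => greedyValue_mem_Icc hQ' s'
  rw [sub_zero] at hmodel
  rw [hardBellman_sub_hardBellman]
  refine (abs_add_le _ _).trans (add_le_add_right ?_ _)
  rw [abs_mul, abs_of_nonneg hγ]
  exact mul_le_mul_of_nonneg_left ((abs_add_le _ _).trans (add_le_add hexpect hmodel)) hγ

end Bellman

theorem qstar_error_mle_general {S A : Type*} [Fintype S] [Fintype A]
    [Nonempty S] [Nonempty A]
    (p phat : S → A → S → ℝ) (r rhat : S → A → ℝ) (γ rmax εp εr : ℝ)
    (hp : ∀ s a s', 0 ≤ p s a s') (hpsum : ∀ s a, ∑ s' : S, p s a s' = 1)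
    (hphatsum : ∀ s a, ∑ s' : S, phat s a s' = 1)
    (hγ0 : 0 ≤ γ) (hγ1 : γ < 1)
    (hεp : ∀ s a, ∑ s' : S, |p s a s' - phat s a s'| ≤ εp)
    (hεr : ∀ s a, |r s a - rhat s a| ≤ εr)
    (Qstar Qhat : S × A → ℝ)
    (hQstar : ∀ sa : S × A, Qstar sa = hardBellman p r γ Qstar sa)
    (hQhat : ∀ sa : S × A, Qhat sa = hardBellman phat rhat γ Qhat sa)
    (hQhat0 : ∀ sa : S × A, 0 ≤ Qhat sa)
    (hQhatub : ∀ sa : S × A, Qhat sa ≤ rmax / (1 - γ)) :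
    Finset.univ.sup' Finset.univ_nonempty
        (fun sa : S × A => |Qstar sa - Qhat sa|)
      ≤ εr / (1 - γ) + γ * εp * rmax / (2 * (1 - γ) ^ 2) := by
  set D := Finset.univ.sup' Finset.univ_nonempty fun sa : S × A => |Qstar sa - Qhat sa|
  set M := rmax / (1 - γ)
  have h1γ : 0 < 1 - γ := by linarith
  have hM : 0 ≤ M := (hQhat0 (Classical.arbitrary _)).trans (hQhatub _)
  have hQQ : ∀ sa, |Qstar sa - Qhat sa| ≤ D := fun sa =>
    Finset.le_sup' (fun sa => |Qstar sa - Qhat sa|) (Finset.mem_univ sa)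
  have hcontract : D ≤ εr + γ * (D + εp * (M / 2)) := by
    refine Finset.sup'_le _ _ fun ⟨s, a⟩ _ => ?_
    rw [hQstar, hQhat]
    refine (abs_hardBellman_sub_hardBellman_le p phat r rhat (hp s a) (hpsum s a)
      (hphatsum s a) hγ0 hQQ fun sa => ⟨hQhat0 sa, hQhatub sa⟩).trans ?_
    gcongr
    exacts [hεr s a, hεp s a]
  have hrhs : εr / (1 - γ) + γ * εp * rmax / (2 * (1 - γ) ^ 2)
      = (εr + γ * (εp * (M / 2))) / (1 - γ) := by
    simp only [M]
    field_simp
  rw [hrhs, le_div_iff₀ h1γ]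
  linarith

/-- MLE part of the Q* approximation error theorem: if `Q*` is the fixed point
of the true Bellman optimality operator and `Q̂` is the fixed point of the
Bellman optimality operator of an approximate model with transition error at
most `ε_p` (ℓ¹) and reward error at most `ε_r` (sup norm), then
`max_{s,a} |Q*(s,a) − Q̂(s,a)| ≤ ε_r / (1-γ) + γ ε_p r_max / (2 (1-γ)²)`. -/
theorem qstar_error_mle {S A : Type*} [Fintype S] [Fintype A]
    [Nonempty S] [Nonempty A]
    (p phat : S → A → S → ℝ) (r rhat : S → A → ℝ) (γ rmax εp εr : ℝ)
    (hp : ∀ s a s', 0 ≤ p s a s') (hpsum : ∀ s a, ∑ s' : S, p s a s' = 1)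
    (hphat : ∀ s a s', 0 ≤ phat s a s') (hphatsum : ∀ s a, ∑ s' : S, phat s a s' = 1)
    (hr0 : ∀ s a, 0 ≤ r s a) (hrmax : ∀ s a, r s a ≤ rmax)
    (hγ0 : 0 ≤ γ) (hγ1 : γ < 1)
    (hεp : ∀ s a, ∑ s' : S, |p s a s' - phat s a s'| ≤ εp)
    (hεr : ∀ s a, |r s a - rhat s a| ≤ εr)
    (Qstar Qhat : S × A → ℝ)
    (hQstar : ∀ sa : S × A, Qstar sa = hardBellman p r γ Qstar sa)
    (hQhat : ∀ sa : S × A, Qhat sa = hardBellman phat rhat γ Qhat sa)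
    (hQhat0 : ∀ sa : S × A, 0 ≤ Qhat sa)
    (hQhatub : ∀ sa : S × A, Qhat sa ≤ rmax / (1 - γ)) :
    Finset.univ.sup' Finset.univ_nonempty
        (fun sa : S × A => |Qstar sa - Qhat sa|)
      ≤ εr / (1 - γ) + γ * εp * rmax / (2 * (1 - γ) ^ 2) :=
  qstar_error_mle_general p phat r rhat γ rmax εp εr hp hpsum hphatsum hγ0 hγ1 hεp hεr Qstar Qhat
    hQstar hQhat hQhat0 hQhatub
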